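/- arXiv:2308.04314 — 2 statements merged into one kernel-verified Lean document; each statement's English description precedes it below -/
import Mathlib

section
/- Let (Ω, 𝒫) be a probability space and let X_{j,k}, for j ∈ {1,…,M} and k ∈ ℕ, be independent identically distributed random variables taking values in [0,1] with common mean μ. Fix α > 0, β ≥ 1, δ ∈ (0,1), natural numbers 1 ≤ n_c ≤ n_s ≤ n_t with n_t ≤ β²·n_s, and an agent index j ∈ {1,…,M}. Define S_{j'} := Σ_{k=1}^{n_c} X_{j',k} and T_{j'} := Σ_{k=1}^{n_s} X_{j',k} for each j', U := Σ_{k=1}^{n_t} X_{j,k}, the auxiliary estimates aux_{j'} := (Σ_{j''=1}^{M} S_{j''} + M·(T_{j'} − S_{j'}))/(M·n_s), the common mean com := (Σ_{j''=1}^{M} S_{j''})/(M·n_c), and the local estimate μ̂ := (M·n_s·aux_j + (U − T_j))/(M·n_s + n_t − n_s). Let E be the event that |aux_{j'} − com| ≤ α·√(log(1/δ)/(2·M·n_s)) for every j' ∈ {1,…,M}. Then 𝒫(E ∩ {|μ̂ − μ| > (2α+1)·β·√(log(1/δ)/(2·M·n_t))}) ≤ 2δ. -/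
/-!
Let `W` be the sum of the `N = M n_s + n_t - n_s` samples entering `μ̂`: every agent's first `n_s`
samples and agent `j`'s later ones. By Hoeffding's inequality, `|W / N - μ| < CI(N)` outside an
event of probability `2δ`. The auxiliary estimates average to the pooled mean of the first `n_s`
rounds, so `μ̂ - W / N = (M n_s / N) (aux_j - mean aux)`, which on `E` is at most `2α·CI(M n_s)`.
Finally `N ≥ M n_s ≥ M n_t / β²` bounds both `CI(N)` and `CI(M n_s)` by `β·CI(M n_t)`.
-/

open MeasureTheory ProbabilityTheory Real

namespace ProbabilityTheory

variable {Ω ι : Type*} [MeasurableSpace Ω] {P : Measure Ω}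

lemma HasSubgaussianMGF.measureReal_abs_ge_le [IsFiniteMeasure P] {Y : Ω → ℝ} {c : NNReal}
    (h : HasSubgaussianMGF Y c P) {ε : ℝ} (hε : 0 ≤ ε) :
    P.real {ω | ε ≤ |Y ω|} ≤ 2 * exp (-ε ^ 2 / (2 * c)) :=
  calc P.real {ω | ε ≤ |Y ω|}
      ≤ P.real ({ω | ε ≤ Y ω} ∪ {ω | ε ≤ (-Y) ω}) :=
        measureReal_mono fun ω (hω : ε ≤ |Y ω|) ↦ le_abs.1 hω
    _ ≤ P.real {ω | ε ≤ Y ω} + P.real {ω | ε ≤ (-Y) ω} := measureReal_union_le _ _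
    _ ≤ exp (-ε ^ 2 / (2 * c)) + exp (-ε ^ 2 / (2 * c)) :=
        add_le_add (h.measure_ge_le hε) (h.neg.measure_ge_le hε)
    _ = 2 * exp (-ε ^ 2 / (2 * c)) := by ring

/-- **Hoeffding's inequality**, two-sided, for independent variables with values in `[a, b]`. -/
lemma measureReal_abs_sum_sub_integral_ge_le [IsProbabilityMeasure P] {X : ι → Ω → ℝ}
    (hindep : iIndepFun X P) (hmeas : ∀ i, AEMeasurable (X i) P) {a b : ℝ}
    (hrange : ∀ i, ∀ᵐ ω ∂P, X i ω ∈ Set.Icc a b) (s : Finset ι) {ε : ℝ} (hε : 0 ≤ ε) :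
    P.real {ω | ε ≤ |∑ i ∈ s, (X i ω - P[X i])|} ≤
      2 * exp (-2 * ε ^ 2 / (s.card * (b - a) ^ 2)) := by
  have hcentered : iIndepFun (fun i ω ↦ X i ω - P[X i]) P :=
    hindep.comp (g := fun i x ↦ x - ∫ ω, X i ω ∂P) fun _ ↦ measurable_id.sub_const _
  have hsum := HasSubgaussianMGF.sum_of_iIndepFun hcentered (s := s)
    fun i _ ↦ hasSubgaussianMGF_of_mem_Icc (hmeas i) (hrange i)
  refine (hsum.measureReal_abs_ge_le hε).trans_eq ?_
  rw [Finset.sum_const, nsmul_eq_mul]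
  push_cast
  rw [Real.norm_eq_abs, div_pow, sq_abs,
    show (2 : ℝ) * (s.card * ((b - a) ^ 2 / 2 ^ 2)) = s.card * (b - a) ^ 2 / 2 by ring,
    div_div_eq_mul_div]
  ring_nf

lemma measureReal_abs_sum_sub_integral_ge_le_two_mul [IsProbabilityMeasure P]
    {X : ι → Ω → ℝ} (hindep : iIndepFun X P) (hmeas : ∀ i, AEMeasurable (X i) P)
    (hrange : ∀ i, ∀ᵐ ω ∂P, X i ω ∈ Set.Icc (0 : ℝ) 1) {s : Finset ι} (hs : s.Nonempty)
    {δ : ℝ} (hδ0 : 0 < δ) (hδ1 : δ ≤ 1) :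
    P.real {ω | s.card * √(log (1 / δ) / (2 * s.card)) ≤ |∑ i ∈ s, (X i ω - P[X i])|} ≤
      2 * δ := by
  have hL : 0 ≤ log (1 / δ) := log_nonneg (by rw [le_div_iff₀ hδ0]; linarith)
  have hn : (0 : ℝ) < s.card := by exact_mod_cast hs.card_pos
  refine (measureReal_abs_sum_sub_integral_ge_le hindep hmeas hrange s
    (by positivity)).trans_eq ?_
  rw [mul_pow, sq_sqrt (by positivity), show -2 * (s.card ^ 2 * (log (1 / δ) / (2 * s.card))) /
    (s.card * (1 - 0) ^ 2) = -log (1 / δ) by field_simp; ring, one_div, log_inv, neg_neg,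
    exp_log hδ0]

end ProbabilityTheory

lemma Real.sqrt_div_le_mul_sqrt_div {L a b β : ℝ} (hL : 0 ≤ L) (hb : 0 < b) (hβ : 0 ≤ β)
    (hab : b ≤ β ^ 2 * a) : √(L / a) ≤ β * √(L / b) := by
  have ha : 0 < a := by nlinarith
  rw [← sqrt_sq hβ, ← sqrt_mul (sq_nonneg β)]
  gcongr
  rw [mul_div_assoc', div_le_div_iff₀ ha hb]
  nlinarith

lemma abs_sub_sum_div_card_le {α : Type*} [Fintype α] {a : α → ℝ} {c r : ℝ}
    (h : ∀ i, |a i - c| ≤ r) (i : α) : |a i - (∑ k, a k) / Fintype.card α| ≤ 2 * r := by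
  have hcard : (0 : ℝ) < Fintype.card α := by exact_mod_cast Fintype.card_pos_iff.2 ⟨i⟩
  have hmean : |(∑ k, a k) / Fintype.card α - c| ≤ r := by
    have hsum : (∑ k, a k) / Fintype.card α - c = (∑ k, (a k - c)) / Fintype.card α := by
      rw [Finset.sum_sub_distrib, Finset.sum_const, Finset.card_univ, nsmul_eq_mul]
      field_simp
    rw [hsum, abs_div, abs_of_pos hcard, div_le_iff₀' hcard]
    calc |∑ k, (a k - c)| ≤ ∑ k, |a k - c| := Finset.abs_sum_le_sum_abs _ _
      _ ≤ ∑ _k : α, r := Finset.sum_le_sum fun k _ ↦ h k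
      _ = Fintype.card α * r := by simp
  calc |a i - (∑ k, a k) / Fintype.card α|
      ≤ |a i - c| + |c - (∑ k, a k) / Fintype.card α| := abs_sub_le _ _ _
    _ ≤ r + r := add_le_add (h i) (abs_sub_comm c _ ▸ hmean)
    _ = 2 * r := (two_mul r).symm

/-- If the pooled mean `(∑ T + V) / (A + d)` is within `ε` of `μ`, then so is the local estimate,
up to twice the spread `r` of the auxiliary estimates. -/
lemma abs_add_div_sub_lt_of_abs_sum_add_sub_lt {M : ℕ} {S T aux : Fin M → ℝ}
    {A d c r V μ ε : ℝ} (hA : 0 < A) (hd : 0 ≤ d)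
    (haux : ∀ j', aux j' = (∑ j'', S j'' + M * (T j' - S j')) / A)
    (hE : ∀ j', |aux j' - c| ≤ r) (j : Fin M)
    (hpooled : |∑ j'', T j'' + V - (A + d) * μ| < (A + d) * ε) :
    |(A * aux j + V) / (A + d) - μ| < 2 * r + ε := by
  have hM : (M : ℝ) ≠ 0 := by exact_mod_cast j.pos.ne'
  have hAd : 0 < A + d := by linarith
  have hmean : (∑ j'', aux j'') / M = (∑ j'', T j'') / A := by
    simp only [haux, ← Finset.sum_div, Finset.sum_add_distrib, ← Finset.mul_sum,
      Finset.sum_sub_distrib, Finset.sum_const, Finset.card_univ, Fintype.card_fin, nsmul_eq_mul]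
    field_simp
    ring
  have hsplit : (A * aux j + V) / (A + d) - μ
      = A / (A + d) * (aux j - (∑ j'', aux j'') / Fintype.card (Fin M))
        + (∑ j'', T j'' + V - (A + d) * μ) / (A + d) := by
    rw [Fintype.card_fin, hmean]
    field_simp
    ring
  have hlocal : A / (A + d) * |aux j - (∑ j'', aux j'') / Fintype.card (Fin M)| ≤ 2 * r :=
    calc _ ≤ 1 * (2 * r) := mul_le_mul (div_le_one_of_le₀ (by linarith) hAd.le)
          (abs_sub_sum_div_card_le hE j) (abs_nonneg _) zero_le_one
      _ = 2 * r := one_mul _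
  rw [hsplit]
  refine (abs_add_le _ _).trans_lt ?_
  rw [abs_mul, abs_of_pos (div_pos hA hAd), abs_div, abs_of_pos hAd]
  exact add_lt_add_of_le_of_lt hlocal ((div_lt_iff₀' hAd).2 hpooled)

/-- The samples entering agent `j`'s local estimate. -/
def pooledSamples (M n_s n_t : ℕ) (j : Fin M) : Finset (Fin M × ℕ) :=
  Finset.univ ×ˢ Finset.range n_s ∪ {j} ×ˢ Finset.Ico n_s n_t

section pooledSamples

variable {M n_s n_t : ℕ} (j : Fin M)

lemma disjoint_univ_product_range_singleton_product_Ico :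
    Disjoint (Finset.univ ×ˢ Finset.range n_s) ({j} ×ˢ Finset.Ico n_s n_t) := by
  simp only [Finset.disjoint_left, Finset.mem_product, Finset.mem_range, Finset.mem_Ico]
  omega

lemma card_pooledSamples (hst : n_s ≤ n_t) :
    ((pooledSamples M n_s n_t j).card : ℝ) = M * n_s + (n_t - n_s) := by
  rw [pooledSamples,
    Finset.card_union_of_disjoint (disjoint_univ_product_range_singleton_product_Ico j),
    Finset.card_product, Finset.card_product]
  simp [Nat.cast_sub hst]

lemma sum_pooledSamples (hst : n_s ≤ n_t) (f : Fin M → ℕ → ℝ) :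
    ∑ p ∈ pooledSamples M n_s n_t j, f p.1 p.2 =
      ∑ j', ∑ k ∈ Finset.range n_s, f j' k +
        (∑ k ∈ Finset.range n_t, f j k - ∑ k ∈ Finset.range n_s, f j k) := by
  rw [pooledSamples, Finset.sum_union (disjoint_univ_product_range_singleton_product_Ico j),
    Finset.sum_product, Finset.sum_product, Finset.sum_singleton, Finset.sum_Ico_eq_sub _ hst]

end pooledSamples

theorem stmt0_general {Ω : Type*} [MeasurableSpace Ω] (P : Measure Ω) [IsProbabilityMeasure P]
    (M : ℕ)
    (X : Fin M → ℕ → Ω → ℝ) (μ : ℝ)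
    (hmeas : ∀ j k, Measurable (X j k))
    (hindep : iIndepFun
      (fun p : Fin M × ℕ => X p.1 p.2) P)
    (hrange : ∀ j k ω, X j k ω ∈ Set.Icc (0 : ℝ) 1)
    (hmean : ∀ j k, ∫ ω, X j k ω ∂P = μ)
    (α β δ : ℝ) (hα : 0 < α) (hβ : 1 ≤ β) (hδ0 : 0 < δ) (hδ1 : δ < 1)
    (n_c n_s n_t : ℕ) (hnc : 1 ≤ n_c) (hcs : n_c ≤ n_s) (hst : n_s ≤ n_t)
    (hts : (n_t : ℝ) ≤ β ^ 2 * n_s)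
    (j : Fin M)
    (S T : Fin M → Ω → ℝ) (U : Ω → ℝ)
    (aux : Fin M → Ω → ℝ) (com μhat : Ω → ℝ)
    (hT : ∀ j' ω, T j' ω = ∑ k ∈ Finset.range n_s, X j' k ω)
    (hU : ∀ ω, U ω = ∑ k ∈ Finset.range n_t, X j k ω)
    (haux : ∀ j' ω, aux j' ω =
      ((∑ j'', S j'' ω) + (M : ℝ) * (T j' ω - S j' ω)) / ((M : ℝ) * n_s))
    (hμhat : ∀ ω, μhat ω =
      ((M : ℝ) * n_s * aux j ω + (U ω - T j ω)) / ((M : ℝ) * n_s + n_t - n_s)) :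
    P ({ω | ∀ j', |aux j' ω - com ω| ≤ α * Real.sqrt (Real.log (1 / δ) / (2 * M * n_s))} ∩
        {ω | (2 * α + 1) * β * Real.sqrt (Real.log (1 / δ) / (2 * M * n_t))
          < |μhat ω - μ|})
      ≤ ENNReal.ofReal (2 * δ) := by
  have hM : (0 : ℝ) < M := by exact_mod_cast j.pos
  have hns : (0 : ℝ) < n_s := by exact_mod_cast hnc.trans hcs
  have hnst : (n_s : ℝ) ≤ n_t := by exact_mod_cast hst
  have hL : 0 ≤ log (1 / δ) := log_nonneg (by rw [le_div_iff₀ hδ0]; linarith)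
  set N : ℝ := M * n_s + (n_t - n_s)
  have hcard : ((pooledSamples M n_s n_t j).card : ℝ) = N := card_pooledSamples j hst
  have hs : (pooledSamples M n_s n_t j).Nonempty := ⟨(j, 0), Finset.mem_union_left _
    (Finset.mem_product.2 ⟨Finset.mem_univ j, Finset.mem_range.2 (hnc.trans hcs)⟩)⟩
  have hHoeffding := measureReal_abs_sum_sub_integral_ge_le_two_mul hindep
    (fun p ↦ (hmeas p.1 p.2).aemeasurable) (fun p ↦ ae_of_all _ (hrange p.1 p.2)) hs hδ0 hδ1.le
  have hb : (0 : ℝ) < 2 * M * n_t := mul_pos (by positivity) (hns.trans_le hnst)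
  have hMnt := mul_le_mul_of_nonneg_left hts hM.le
  have hCIs : √(log (1 / δ) / (2 * M * n_s)) ≤ β * √(log (1 / δ) / (2 * M * n_t)) :=
    sqrt_div_le_mul_sqrt_div hL hb (by linarith) (by linarith)
  have hCIN : √(log (1 / δ) / (2 * N)) ≤ β * √(log (1 / δ) / (2 * M * n_t)) :=
    sqrt_div_le_mul_sqrt_div hL hb (by linarith)
      (by nlinarith [mul_le_mul_of_nonneg_left (sub_nonneg.2 hnst) (sq_nonneg β)])
  refine (measure_mono fun ω hω ↦ ?_).trans
    ((ofReal_measureReal (by finiteness)).symm.trans_le (ENNReal.ofReal_le_ofReal hHoeffding))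
  obtain ⟨hE, hB⟩ := hω
  by_contra hdev
  simp only [Set.mem_ofPred_eq, not_le, hcard, hmean, Finset.sum_sub_distrib,
    Finset.sum_const, nsmul_eq_mul, sum_pooledSamples j hst (X · · ω), ← hT, ← hU] at hE hB hdev
  have hlocal := abs_add_div_sub_lt_of_abs_sum_add_sub_lt (by positivity) (sub_nonneg.2 hnst)
    (haux · ω) hE j hdev
  rw [← add_sub_assoc (M * n_s : ℝ), ← hμhat] at hlocal
  linarith [mul_le_mul_of_nonneg_left hCIs hα.le]

/-- probabilistic core of Lemma 1.  `M` agents sample a common i.i.d.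
`[0,1]`-valued process with mean `μ`; `n_c ≤ n_s ≤ n_t` are the per-agent sample
counts at the last communication, at the last threshold check, and currently, with
`n_t ≤ β²·n_s`.  On the event that every auxiliary local estimate is within the
threshold `α·√(log(1/δ)/(2Mn_s))` of the common mean, the local estimate `μ̂` of
agent `j` deviates from `μ` by more than `(2α+1)β·√(log(1/δ)/(2Mn_t))` with
probability at most `2δ`. -/
theorem stmt0 {Ω : Type*} [MeasurableSpace Ω] (P : Measure Ω) [IsProbabilityMeasure P]
    (M : ℕ) (hM : 1 ≤ M)
    (X : Fin M → ℕ → Ω → ℝ) (μ : ℝ)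
    (hmeas : ∀ j k, Measurable (X j k))
    (hindep : iIndepFun
      (fun p : Fin M × ℕ => X p.1 p.2) P)
    (hident : ∀ j k j' k', IdentDistrib (X j k) (X j' k') P P)
    (hrange : ∀ j k ω, X j k ω ∈ Set.Icc (0 : ℝ) 1)
    (hmean : ∀ j k, ∫ ω, X j k ω ∂P = μ)
    (α β δ : ℝ) (hα : 0 < α) (hβ : 1 ≤ β) (hδ0 : 0 < δ) (hδ1 : δ < 1)
    (n_c n_s n_t : ℕ) (hnc : 1 ≤ n_c) (hcs : n_c ≤ n_s) (hst : n_s ≤ n_t)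
    (hts : (n_t : ℝ) ≤ β ^ 2 * n_s)
    (j : Fin M)
    (S T : Fin M → Ω → ℝ) (U : Ω → ℝ)
    (aux : Fin M → Ω → ℝ) (com μhat : Ω → ℝ)
    (hS : ∀ j' ω, S j' ω = ∑ k ∈ Finset.range n_c, X j' k ω)
    (hT : ∀ j' ω, T j' ω = ∑ k ∈ Finset.range n_s, X j' k ω)
    (hU : ∀ ω, U ω = ∑ k ∈ Finset.range n_t, X j k ω)
    (haux : ∀ j' ω, aux j' ω =
      ((∑ j'', S j'' ω) + (M : ℝ) * (T j' ω - S j' ω)) / ((M : ℝ) * n_s))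
    (hcom : ∀ ω, com ω = (∑ j'', S j'' ω) / ((M : ℝ) * n_c))
    (hμhat : ∀ ω, μhat ω =
      ((M : ℝ) * n_s * aux j ω + (U ω - T j ω)) / ((M : ℝ) * n_s + n_t - n_s)) :
    P ({ω | ∀ j', |aux j' ω - com ω| ≤ α * Real.sqrt (Real.log (1 / δ) / (2 * M * n_s))} ∩
        {ω | (2 * α + 1) * β * Real.sqrt (Real.log (1 / δ) / (2 * M * n_t))
          < |μhat ω - μ|})
      ≤ ENNReal.ofReal (2 * δ) :=
  stmt0_general P M X μ hmeas hindep hrange hmean α β δ hα hβ hδ0 hδ1 n_c n_s n_t hnc hcs hst hts j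
    S T U aux com μhat hT hU haux hμhat
end

section
/- Let α > 0, β ≥ 1, δ ∈ (0,1), let M ≥ 1, n ≥ 2, m ≥ 1 be natural numbers with m ≥ n − 1, and let Δ > 0. If 2(2α+1)β·√(log(1/δ)/(2·M·n)) + 2(2α+1)β·√(log(1/δ)/(2·M·m)) ≥ Δ, then M·n ≤ 8(2α+1)²β²·log(1/δ)/Δ² + M. -/
/-- arithmetic core of Lemma 2.  If
`2(2α+1)β·√(log(1/δ)/(2Mn)) + 2(2α+1)β·√(log(1/δ)/(2Mm)) ≥ Δ` with `m ≥ n − 1`,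
then `M·n ≤ 8(2α+1)²β²·log(1/δ)/Δ² + M`. -/
theorem stmt1 (α β δ : ℝ) (hα : 0 < α) (hβ : 1 ≤ β) (hδ0 : 0 < δ) (hδ1 : δ < 1)
    (M n m : ℕ) (hM : 1 ≤ M) (hn : 2 ≤ n) (hm : 1 ≤ m) (hmn : n - 1 ≤ m)
    (Δ : ℝ) (hΔ : 0 < Δ)
    (h : Δ ≤ 2 * (2 * α + 1) * β * Real.sqrt (Real.log (1 / δ) / (2 * M * n))
        + 2 * (2 * α + 1) * β * Real.sqrt (Real.log (1 / δ) / (2 * M * m))) :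
    (M * n : ℝ) ≤ 8 * (2 * α + 1) ^ 2 * β ^ 2 * Real.log (1 / δ) / Δ ^ 2 + M := by
  set L := Real.log (1 / δ) with hL
  have hLpos : 0 < L := Real.log_pos (by rw [one_div]; exact (one_lt_inv_iff₀).2 ⟨hδ0, hδ1⟩)
  have hMR : (1 : ℝ) ≤ M := by exact_mod_cast hM
  have hMpos : (0 : ℝ) < M := by linarith
  have hnR : (2 : ℝ) ≤ n := by exact_mod_cast hn
  have hmR : (1 : ℝ) ≤ m := by exact_mod_cast hm
  have hmnR : (n : ℝ) - 1 ≤ m := by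
    have : ((n - 1 : ℕ) : ℝ) ≤ m := by exact_mod_cast hmn
    rwa [Nat.cast_sub (by omega), Nat.cast_one] at this
  set c := 2 * (2 * α + 1) * β with hc
  have hcpos : 0 < c := by
    have : (0:ℝ) < 2 * α + 1 := by linarith
    have : (0:ℝ) < 2 * (2 * α + 1) := by linarith
    nlinarith
  have hn1pos : (0:ℝ) < (n:ℝ) - 1 := by linarith
  have hden : (0:ℝ) < 2 * M * ((n:ℝ) - 1) := by positivity
  -- bound each sqrt term by sqrt(L/(2M(n-1)))
  have key : Δ ≤ 2 * c * Real.sqrt (L / (2 * M * ((n:ℝ) - 1))) := by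
    have h1 : Real.sqrt (L / (2 * M * n)) ≤ Real.sqrt (L / (2 * M * ((n:ℝ) - 1))) := by
      apply Real.sqrt_le_sqrt
      apply div_le_div_of_nonneg_left hLpos.le hden
      nlinarith
    have h2 : Real.sqrt (L / (2 * M * m)) ≤ Real.sqrt (L / (2 * M * ((n:ℝ) - 1))) := by
      apply Real.sqrt_le_sqrt
      apply div_le_div_of_nonneg_left hLpos.le hden
      nlinarith
    calc Δ ≤ c * Real.sqrt (L / (2 * M * n)) + c * Real.sqrt (L / (2 * M * m)) := h
      _ ≤ c * Real.sqrt (L / (2 * M * ((n:ℝ) - 1))) + c * Real.sqrt (L / (2 * M * ((n:ℝ) - 1))) := by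
          have := mul_le_mul_of_nonneg_left h1 hcpos.le
          have := mul_le_mul_of_nonneg_left h2 hcpos.le
          linarith
      _ = 2 * c * Real.sqrt (L / (2 * M * ((n:ℝ) - 1))) := by ring
  -- square
  have hsq : Δ ^ 2 ≤ (2 * c) ^ 2 * (L / (2 * M * ((n:ℝ) - 1))) := by
    have h0 : (0:ℝ) ≤ 2 * c * Real.sqrt (L / (2 * M * ((n:ℝ) - 1))) := by positivity
    have := mul_self_le_mul_self hΔ.le key
    have hs : Real.sqrt (L / (2 * M * ((n:ℝ) - 1))) * Real.sqrt (L / (2 * M * ((n:ℝ) - 1)))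
        = L / (2 * M * ((n:ℝ) - 1)) := Real.mul_self_sqrt (by positivity)
    nlinarith
  -- rearrange: M(n-1) ≤ 2c² L / Δ²
  have hMn1 : (M : ℝ) * ((n:ℝ) - 1) ≤ 2 * c ^ 2 * L / Δ ^ 2 := by
    rw [le_div_iff₀ (by positivity)]
    have h2 : Δ ^ 2 * (2 * M * ((n:ℝ) - 1)) ≤ (2 * c) ^ 2 * L := by
      have h3 := mul_le_mul_of_nonneg_right hsq hden.le
      have h4 : (2 * c) ^ 2 * (L / (2 * M * ((n:ℝ) - 1))) * (2 * M * ((n:ℝ) - 1))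
          = (2 * c) ^ 2 * L := by field_simp
      linarith
    linarith [h2]
  have hfinal : 2 * c ^ 2 = 8 * (2 * α + 1) ^ 2 * β ^ 2 := by rw [hc]; ring
  have heq : (M:ℝ) * n = (M:ℝ) * ((n:ℝ) - 1) + M := by ring
  calc (M * n : ℝ) ≤ 2 * c ^ 2 * L / Δ ^ 2 + M := by rw [heq]; linarith
    _ = 8 * (2 * α + 1) ^ 2 * β ^ 2 * L / Δ ^ 2 + M := by rw [hfinal]
end
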